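/- arXiv:1103.0412 — 4 statements merged into one kernel-verified Lean document; each statement's English description precedes it below -/
import Mathlib

section
/- Let a₁, …, aₙ be the vertices of a convex polygon in clockwise order, and let 1 ≤ i < j ≤ k < ℓ < m ≤ n be indices. If dist(a₁,aₘ) ≥ max(dist(a₁,a_k), dist(a_j,aₘ)), then dist(a_i,a_ℓ) > min(dist(a_i,a_k), dist(a_j,a_ℓ)). -/
/-- The cross product (signed area determinant) of two vectors in the Euclidean plane. -/
noncomputable def cross2 (u v : EuclideanSpace ℝ (Fin 2)) : ℝ := u 0 * v 1 - u 1 * v 0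

/-- The vertices `P 0, P 1, …` form a convex polygon listed in clockwise order. -/
def ClockwiseConvexPos {n : ℕ} (P : Fin n → EuclideanSpace ℝ (Fin 2)) : Prop :=
  ∀ i j k : Fin n, i < j → j < k → cross2 (P j - P i) (P k - P i) < 0

/-!
Suppose the conclusion fails, so that `dist a_i a_l` is at most both `dist a_i a_k` and
`dist a_j a_l`. In a triangle the larger side faces the larger angle, so the four distance
inequalities give, writing `∠ x y z` for the angle at `y`,

  ∠ a_j a₁ a_m + ∠ a₁ a_m a_k ≤ ∠ a₁ a_j a_m + ∠ a₁ a_k a_m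
                              ≤ ∠ a_i a_j a_l + ∠ a_i a_k a_l
                              ≤ ∠ a_j a_i a_l + ∠ a_i a_l a_k,

where the middle step holds because, by convexity, the angle subtended by `a_i a_l` at `a_j`
(resp. `a_k`) contains the one subtended by `a₁ a_m`. Comparing the angles at the crossing
points of the diagonals of the quadrilaterals `a₁ a_i a_j a_m` and `a_i a_k a_l a_m` shows that
the last sum is strictly smaller than the first.
-/

open EuclideanGeometry

section Cross

variable (a b c u v w : EuclideanSpace ℝ (Fin 2))

@[simp]
lemma cross2_self : cross2 u u = 0 := by
  simp only [cross2]; ring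

@[simp]
lemma cross2_zero_left : cross2 0 v = 0 := by
  simp [cross2]

@[simp]
lemma cross2_zero_right : cross2 u 0 = 0 := by
  simp [cross2]

lemma cross2_smul_smul (r s : ℝ) : cross2 (r • u) (s • u) = 0 := by
  simp only [cross2, PiLp.smul_apply, smul_eq_mul]; ring

lemma cross2_sub_rotate : cross2 (b - a) (c - a) = cross2 (c - b) (a - b) := by
  simp only [cross2, PiLp.sub_apply]; ring

lemma cross2_smul_add_smul :
    cross2 v w • u + cross2 u v • w = cross2 u w • v := by
  ext t; fin_cases t <;> simp [cross2] <;> ring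

end Cross

lemma not_collinear_of_cross2_ne_zero {a b c : EuclideanSpace ℝ (Fin 2)}
    (h : cross2 (b - a) (c - a) ≠ 0) : ¬Collinear ℝ {a, b, c} := by
  rw [collinear_iff_of_mem (Set.mem_insert a _)]
  rintro ⟨v, hv⟩
  obtain ⟨r, rfl⟩ := hv b (by simp)
  obtain ⟨s, rfl⟩ := hv c (by simp)
  simp [cross2_smul_smul] at h

lemma angle_add_angle_of_cross2_nonpos {x y z w : EuclideanSpace ℝ (Fin 2)} (hz : z ≠ x)
    (hyz : cross2 (y - x) (z - x) ≤ 0) (hzw : cross2 (z - x) (w - x) ≤ 0)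
    (hyw : cross2 (y - x) (w - x) < 0) : ∠ y x z + ∠ z x w = ∠ y x w := by
  have hy : x ≠ y := by rintro rfl; simp at hyw
  have hw : x ≠ w := by rintro rfl; simp at hyw
  have key := cross2_smul_add_smul (y - x) (z - x) (w - x)
  set α := cross2 (y - x) (z - x)
  set β := cross2 (z - x) (w - x)
  set γ := cross2 (y - x) (w - x)
  have hsum : α + β < 0 := by
    refine lt_of_le_of_ne (by linarith) fun h0 => hz ?_
    rw [show α = 0 by linarith, show β = 0 by linarith, zero_smul, zero_smul, add_zero,
      eq_comm, smul_eq_zero] at key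
    exact sub_eq_zero.1 (key.resolve_left hyw.ne)
  -- The ray from `x` through `z` meets the segment `[y, w]` at `q`.
  set q := AffineMap.lineMap y w (α / (α + β)) with hq_def
  have hq : Wbtw ℝ y q w := by
    refine ⟨α / (α + β), ⟨div_nonneg_of_nonpos hyz hsum.le, ?_⟩, rfl⟩
    rw [div_le_one_of_neg hsum]; linarith
  have hpos : 0 < γ / (α + β) := div_pos_of_neg_of_neg hyw hsum
  have hqz : q -ᵥ x = (γ / (α + β)) • (z -ᵥ x) := by
    rw [vsub_eq_sub, vsub_eq_sub, div_eq_inv_mul, mul_smul, ← key, hq_def,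
      AffineMap.lineMap_apply_module]
    have : α + β ≠ 0 := hsum.ne
    match_scalars <;> field_simp <;> ring
  have e1 : ∠ y x q = ∠ y x z := by
    rw [angle, angle, hqz, InnerProductGeometry.angle_smul_right_of_pos _ _ hpos]
  have e2 : ∠ q x w = ∠ z x w := by
    rw [angle, angle, hqz, InnerProductGeometry.angle_smul_left_of_pos _ _ hpos]
  rw [← e1, ← e2, angle_add_of_ne_of_ne hy hw hq]

namespace ClockwiseConvexPos

variable {n : ℕ} {P : Fin n → EuclideanSpace ℝ (Fin 2)}

lemma cross2_neg_of_sbtw (hP : ClockwiseConvexPos P) {r s t : Fin n} (h : sbtw r s t) :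
    cross2 (P s - P r) (P t - P r) < 0 := by
  rcases Fin.sbtw_iff.1 h with ⟨hrs, hst⟩ | ⟨hst, htr⟩ | ⟨htr, hrs⟩
  · exact hP r s t hrs hst
  · rw [cross2_sub_rotate]; exact hP s t r hst htr
  · rw [cross2_sub_rotate, cross2_sub_rotate]; exact hP t r s htr hrs

lemma cross2_nonpos_of_btw (hP : ClockwiseConvexPos P) {r s t : Fin n} (h : btw r s t) :
    cross2 (P s - P r) (P t - P r) ≤ 0 := by
  rcases eq_or_ne r s with rfl | hrs
  · simp
  rcases eq_or_ne s t with rfl | hst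
  · simp
  rcases eq_or_ne t r with rfl | htr
  · simp
  refine (hP.cross2_neg_of_sbtw ?_).le
  rw [Fin.btw_iff] at h
  rw [Fin.sbtw_iff]
  omega

lemma not_collinear (hP : ClockwiseConvexPos P) {r s t : Fin n} (hrs : r ≠ s) (hst : s ≠ t)
    (htr : t ≠ r) : ¬Collinear ℝ {P r, P s, P t} := by
  have : sbtw r s t ∨ sbtw r t s := by rw [Fin.sbtw_iff, Fin.sbtw_iff]; omega
  rcases this with h | h
  · exact not_collinear_of_cross2_ne_zero (hP.cross2_neg_of_sbtw h).ne
  · rw [Set.pair_comm]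
    exact not_collinear_of_cross2_ne_zero (hP.cross2_neg_of_sbtw h).ne

lemma angle_add_angle (hP : ClockwiseConvexPos P) {v y z w : Fin n} (hyz : btw v y z)
    (hzw : btw v z w) (hyw : sbtw v y w) (hz : z ≠ v) :
    ∠ (P y) (P v) (P z) + ∠ (P z) (P v) (P w) = ∠ (P y) (P v) (P w) := by
  refine angle_add_angle_of_cross2_nonpos ?_ (hP.cross2_nonpos_of_btw hyz)
    (hP.cross2_nonpos_of_btw hzw) (hP.cross2_neg_of_sbtw hyw)
  rcases eq_or_ne z y with rfl | hzy
  · rintro h; simpa [h] using hP.cross2_neg_of_sbtw hyw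
  · have hvy : v ≠ y := by rintro rfl; exact sbtw_irrefl_left hyw
    exact ne₁₂_of_not_collinear (hP.not_collinear hz hvy hzy.symm)

lemma angle_le_angle_of_dist_le (hP : ClockwiseConvexPos P) {r s t : Fin n} (hrs : r ≠ s)
    (hst : s ≠ t) (htr : t ≠ r) (h : dist (P r) (P s) ≤ dist (P r) (P t)) :
    ∠ (P r) (P t) (P s) ≤ ∠ (P r) (P s) (P t) :=
  (angle_le_iff_dist_le (hP.not_collinear hrs hst htr)).2 h

-- Both sides are `π` minus the angle between the diagonals `P a P c` and `P b P d`.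
lemma angle_add_angle_eq_angle_add_angle (hP : ClockwiseConvexPos P) {a b c d : Fin n}
    (hab : a ≤ b) (hbc : b < c) (hcd : c < d) :
    ∠ (P c) (P b) (P d) + ∠ (P a) (P c) (P b) = ∠ (P a) (P d) (P b) + ∠ (P c) (P a) (P d) := by
  have hac : a ≠ c := by omega
  have hbd : b ≠ d := by omega
  have hsum_acd := angle_add_angle_add_angle_eq_pi (P d)
    (ne₁₂_of_not_collinear (hP.not_collinear hac hcd.ne (by omega))).symm
  have hsum_bcd := angle_add_angle_add_angle_eq_pi (P d)
    (ne₁₂_of_not_collinear (hP.not_collinear hbc.ne hcd.ne (by omega))).symm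
  have hc := hP.angle_add_angle (v := c) (y := d) (z := a) (w := b)
    (by rw [Fin.btw_iff]; omega) (by rw [Fin.btw_iff]; omega) (by rw [Fin.sbtw_iff]; omega) hac
  have hd := hP.angle_add_angle (v := d) (y := a) (z := b) (w := c)
    (by rw [Fin.btw_iff]; omega) (by rw [Fin.btw_iff]; omega) (by rw [Fin.sbtw_iff]; omega) hbd
  linarith [angle_comm (P a) (P c) (P d), angle_comm (P c) (P d) (P a),
    angle_comm (P d) (P a) (P c), angle_comm (P b) (P c) (P d), angle_comm (P c) (P d) (P b),
    angle_comm (P d) (P b) (P c)]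

lemma angle_le_angle_of_le_of_lt (hP : ClockwiseConvexPos P) {a b v c d : Fin n}
    (hab : a ≤ b) (hbv : b < v) (hvc : v < c) (hcd : c ≤ d) :
    ∠ (P a) (P v) (P d) ≤ ∠ (P b) (P v) (P c) := by
  have hc := hP.angle_add_angle (v := v) (y := c) (z := d) (w := b)
    (by rw [Fin.btw_iff]; omega) (by rw [Fin.btw_iff]; omega) (by rw [Fin.sbtw_iff]; omega)
    (by omega)
  have hd := hP.angle_add_angle (v := v) (y := d) (z := a) (w := b)
    (by rw [Fin.btw_iff]; omega) (by rw [Fin.btw_iff]; omega) (by rw [Fin.sbtw_iff]; omega)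
    (by omega)
  rw [angle_comm (P b) (P v) (P c), angle_comm (P a) (P v) (P d)]
  linarith [angle_nonneg (P c) (P v) (P d), angle_nonneg (P a) (P v) (P b)]

lemma angle_add_angle_lt (hP : ClockwiseConvexPos P) {o i j k l m : Fin n} (hoi : o ≤ i)
    (hij : i < j) (hjk : j ≤ k) (hkl : k < l) (hlm : l < m) :
    ∠ (P j) (P i) (P l) + ∠ (P i) (P l) (P k) < ∠ (P j) (P o) (P m) + ∠ (P o) (P m) (P k) := by
  have h₁ := hP.angle_add_angle_eq_angle_add_angle hoi hij (hjk.trans_lt (hkl.trans hlm))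
  have h₂ := hP.angle_add_angle_eq_angle_add_angle (hij.le.trans hjk) hkl hlm
  have hi := hP.angle_add_angle (v := i) (y := j) (z := l) (w := m)
    (by rw [Fin.btw_iff]; omega) (by rw [Fin.btw_iff]; omega) (by rw [Fin.sbtw_iff]; omega)
    (by omega)
  have hm := hP.angle_add_angle (v := m) (y := o) (z := i) (w := k)
    (by rw [Fin.btw_iff]; omega) (by rw [Fin.btw_iff]; omega) (by rw [Fin.sbtw_iff]; omega)
    (by omega)
  have hpos := angle_pos_of_not_collinear
    (hP.not_collinear (r := l) (s := k) (t := m) (by omega) (by omega) (by omega))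
  linarith [angle_nonneg (P o) (P j) (P i), angle_comm (P l) (P i) (P m)]

end ClockwiseConvexPos

/-- Fact 4 (strengthened Altman lemma): with vertices `a₁ = P 0, …, aₙ = P (n-1)` of a
convex polygon in clockwise order and indices `i < j ≤ k < l < m`, if
`dist a₁ aₘ ≥ max (dist a₁ a_k) (dist a_j aₘ)` then
`dist a_i a_l > min (dist a_i a_k) (dist a_j a_l)`. -/
theorem stmt4 {n : ℕ} [NeZero n] (P : Fin n → EuclideanSpace ℝ (Fin 2))
    (hP : ClockwiseConvexPos P)
    (i j k l m : Fin n) (hij : i < j) (hjk : j ≤ k) (hkl : k < l) (hlm : l < m)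
    (h : max (dist (P 0) (P k)) (dist (P j) (P m)) ≤ dist (P 0) (P m)) :
    min (dist (P i) (P k)) (dist (P j) (P l)) < dist (P i) (P l) := by
  by_contra! hmin
  obtain ⟨hik, hjl⟩ := le_min_iff.1 hmin
  have h0i : (0 : Fin n) ≤ i := Fin.zero_le i
  have h0jm := hP.angle_le_angle_of_dist_le (r := m) (s := j) (t := 0) (by omega) (by omega)
    (by omega) (by rw [dist_comm, dist_comm (P m)]; exact (le_max_right _ _).trans h)
  have h0km := hP.angle_le_angle_of_dist_le (r := 0) (s := k) (t := m) (by omega) (by omega)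
    (by omega) ((le_max_left _ _).trans h)
  have hikl := hP.angle_le_angle_of_dist_le (r := i) (s := l) (t := k) (by omega) (by omega)
    (by omega) hik
  have hijl := hP.angle_le_angle_of_dist_le (r := l) (s := i) (t := j) (by omega) (by omega)
    (by omega) (by rw [dist_comm, dist_comm (P l)]; exact hjl)
  have hj := hP.angle_le_angle_of_le_of_lt h0i hij (hjk.trans_lt hkl) hlm.le
  have hk := hP.angle_le_angle_of_le_of_lt h0i (hij.trans_le hjk) hkl hlm.le
  have hsum := hP.angle_add_angle_lt h0i hij hjk hkl hlm
  linarith [angle_comm (P m) (P 0) (P j), angle_comm (P m) (P j) (P 0),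
    angle_comm (P l) (P j) (P i), angle_comm (P l) (P i) (P j)]
end

section
/- Let a, b, c, d be vertices of a convex polygon in clockwise order such that dist(b,c) equals the largest distance d₁ between vertices of the polygon and dist(a,d) equals d₁ as well, and the segments bc and ad do not cross; then the four points a, b, c, d cannot all be distinct; equivalently, any two non-crossing diameters of a convex polygon share an endpoint. -/
lemma cross2_smul_left' (r : ℝ) (x y : EuclideanSpace ℝ (Fin 2)) :
    cross2 (r • x) y = r * cross2 x y := by
  simp only [cross2, PiLp.smul_apply, smul_eq_mul]; ring

set_option maxHeartbeats 1000000 in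
/-- Two non-crossing diameters of a convex polygon share an endpoint: if `a, b, c, d`
appear in clockwise order (so chords `ad` and `bc` are non-crossing) and both
`dist (P b) (P c)` and `dist (P a) (P d)` equal the diameter `d1`, then `a = b` or `c = d`. -/
theorem stmt6 {n : ℕ} (P : Fin n → EuclideanSpace ℝ (Fin 2)) (hP : ClockwiseConvexPos P)
    (d1 : ℝ) (hmax : ∀ u v : Fin n, dist (P u) (P v) ≤ d1)
    (a b c d : Fin n) (hab : a ≤ b) (hbc : b ≤ c) (hcd : c ≤ d)
    (h1 : dist (P b) (P c) = d1) (h2 : dist (P a) (P d) = d1) :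
    a = b ∨ c = d := by
  by_contra hcon
  push_neg at hcon
  obtain ⟨hab', hcd'⟩ := hcon
  have hab2 : a < b := lt_of_le_of_ne hab hab'
  have hcd2 : c < d := lt_of_le_of_ne hcd hcd'
  -- rule out b = c
  rcases eq_or_lt_of_le hbc with hbc' | hbc2
  · have hd1 : d1 = 0 := by rw [← h1, hbc']; simp
    have hall : ∀ u' v' : Fin n, P u' = P v' := by
      intro u' v'
      have := hmax u' v'
      rw [hd1] at this
      exact dist_le_zero.mp this
    have := hP a b d hab2 (lt_of_le_of_lt hbc hcd2)
    rw [hall b a, hall d a] at this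
    simp [cross2] at this
  -- main case: a < b < c < d
  set A := P a with hA
  set B := P b with hB
  set C := P c with hC
  set D := P d with hD
  have k1 : cross2 (B - A) (C - A) < 0 := hP a b c hab2 hbc2
  have k2 : cross2 (B - A) (D - A) < 0 := hP a b d hab2 (hbc2.trans hcd2)
  have k3 : cross2 (C - A) (D - A) < 0 := hP a c d (hab2.trans hbc2) hcd2
  have k4 : cross2 (C - B) (D - B) < 0 := hP b c d hbc2 hcd2
  set u := B - A with hu
  set v := C - A with hv
  set w := D - A with hw
  have hvu : C - B = v - u := by rw [hv, hu]; module
  have hwu : D - B = w - u := by rw [hw, hu]; module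
  have k4' : cross2 v w + cross2 u v - cross2 u w < 0 := by
    rw [hvu, hwu] at k4
    simp only [cross2, PiLp.sub_apply] at k4 ⊢
    nlinarith [k4]
  set Dm : ℝ := cross2 v w + cross2 u v with hDm
  have hDmneg : Dm < 0 := by rw [hDm]; linarith
  have hDmne : Dm ≠ 0 := ne_of_lt hDmneg
  set t : ℝ := cross2 u w / Dm with ht
  set s : ℝ := cross2 u v / Dm with hs
  have ht0 : 0 < t := div_pos_of_neg_of_neg k2 hDmneg
  have ht1 : t < 1 := by
    rw [ht, div_lt_one_of_neg hDmneg, hDm]; linarith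
  have hs0 : 0 < s := div_pos_of_neg_of_neg k1 hDmneg
  have hs1 : s < 1 := by
    rw [hs, div_lt_one_of_neg hDmneg, hDm]; linarith
  set p : EuclideanSpace ℝ (Fin 2) := A + t • v with hp
  -- componentwise identity: t • v = u + s • (w - u)
  have comp0 : t * v 0 = u 0 + s * (w 0 - u 0) := by
    rw [ht, hs, hDm]
    field_simp [show cross2 v w + cross2 u v ≠ 0 from hDmne]
    simp only [cross2]
    ring
  have comp1 : t * v 1 = u 1 + s * (w 1 - u 1) := by
    rw [ht, hs, hDm]
    field_simp [show cross2 v w + cross2 u v ≠ 0 from hDmne]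
    simp only [cross2]
    ring
  have hkey : t • v = u + s • (w - u) := by
    ext i
    have : (t • v) i = t * v i := by simp
    rw [this]
    have : (u + s • (w - u)) i = u i + s * (w i - u i) := by simp
    rw [this]
    fin_cases i
    · simpa using comp0
    · simpa using comp1
  have hpbd : p = B + s • (w - u) := by
    have hBA : B = A + u := by rw [hu]; module
    rw [hp, hBA, hkey]; module
  -- distances along the diagonals
  have distAC : dist A p + dist p C = dist A C := by
    have e1 : dist A p = t * ‖v‖ := by
      have hAp : p - A = t • v := by rw [hp]; module
      rw [dist_comm, dist_eq_norm, hAp, norm_smul]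
      simp [abs_of_pos ht0]
    have e2 : dist p C = (1 - t) * ‖v‖ := by
      have hC' : C = A + v := by rw [hv]; module
      have hCp : C - p = (1 - t) • v := by rw [hp, hC']; module
      rw [dist_comm, dist_eq_norm, hCp, norm_smul]
      simp [abs_of_pos (by linarith : (0:ℝ) < 1 - t)]
    have e3 : dist A C = ‖v‖ := by
      rw [dist_eq_norm, ← norm_neg]
      congr 1
      rw [hv]; module
    rw [e1, e2, e3]; ring
  have distBD : dist B p + dist p D = dist B D := by
    have e1 : dist B p = s * ‖w - u‖ := by
      have hBp : p - B = s • (w - u) := by rw [hpbd]; module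
      rw [dist_comm, dist_eq_norm, hBp, norm_smul]
      simp [abs_of_pos hs0]
    have e2 : dist p D = (1 - s) * ‖w - u‖ := by
      have hD' : D = B + (w - u) := by rw [hw, hu]; module
      have hDp : D - p = (1 - s) • (w - u) := by rw [hpbd, hD']; module
      rw [dist_comm, dist_eq_norm, hDp, norm_smul]
      simp [abs_of_pos (by linarith : (0:ℝ) < 1 - s)]
    have e3 : dist B D = ‖w - u‖ := by
      rw [dist_eq_norm, ← norm_neg]
      congr 1
      rw [hw, hu]; module
    rw [e1, e2, e3]; ring
  -- the chain of inequalities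
  have tri1 : dist A D ≤ dist A p + dist p D := dist_triangle A p D
  have tri2 : dist B C ≤ dist B p + dist p C := dist_triangle B p C
  have hACle : dist A C ≤ d1 := hmax a c
  have hBDle : dist B D ≤ d1 := hmax b d
  have heq : dist A p + dist p D = dist A D := by
    linarith [h1, h2, tri1, tri2, distAC, distBD, hACle, hBDle]
  -- equality forces p onto segment AD, contradicting t > 0 and cross2 v w < 0
  have hwbtw : Wbtw ℝ A p D := dist_add_dist_eq_iff.mp heq
  obtain ⟨r, hr, hpr⟩ := hwbtw
  have hplm : p = A + r • (D - A) := by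
    rw [← hpr, AffineMap.lineMap_apply]
    simp only [vsub_eq_sub, vadd_eq_add]
    module
  have hvw : t • v = r • w := by
    have h' : A + t • v = A + r • w := by rw [← hp, hplm, hw]
    have h'' := congrArg (· - A) h'
    simpa using h''
  have hcz : t * cross2 v w = r * cross2 w w := by
    rw [← cross2_smul_left', ← cross2_smul_left', hvw]
  have hww : cross2 w w = 0 := by simp only [cross2]; ring
  rw [hww, mul_zero] at hcz
  nlinarith [ht0, k3, hcz]
end

section
/- Let f : ℤ/nℤ → ℝ≥0 and α ∈ ℝ. Suppose there is a positive integer m such that for every i ∈ ℤ/nℤ there exists 1 ≤ m' ≤ m with f(i) + f(i+1) + ⋯ + f(i+m'−1) ≤ α·m'. Then Σ_{i ∈ ℤ/nℤ} f(i) ≤ α·n. -/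
open Finset

/-- Sum of `f` over a full period starting anywhere equals the total sum. -/
lemma period_sum (n : ℕ) [NeZero n] (f : ZMod n → ℝ) (c : ZMod n) :
    ∑ t ∈ Finset.range n, f (c + (t : ZMod n)) = ∑ i : ZMod n, f i := by
  have h1 : ∑ i : ZMod n, f i = ∑ i : ZMod n, f (c + i) :=
    (Fintype.sum_equiv (Equiv.addLeft c) _ _ (fun i => rfl)).symm
  rw [h1]
  refine Finset.sum_nbij' (fun (t : ℕ) => (t : ZMod n)) (fun (x : ZMod n) => x.val)
    ?_ ?_ ?_ ?_ ?_
  · intro t _; exact Finset.mem_univ _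
  · intro a _; exact Finset.mem_range.mpr (ZMod.val_lt a)
  · intro t ht; exact ZMod.val_cast_of_lt (Finset.mem_range.mp ht)
  · intro a _; exact ZMod.natCast_rightInverse a
  · intro t _; rfl

/-- Sum of `f` over `L` consecutive residues when `n ∣ L`. -/
lemma multi_period_sum (n : ℕ) [NeZero n] (f : ZMod n → ℝ) (c : ZMod n) (q : ℕ) :
    ∑ t ∈ Finset.range (q * n), f (c + (t : ZMod n)) = q * ∑ i : ZMod n, f i := by
  induction q with
  | zero => simp
  | succ q ih =>
      have : (q + 1) * n = q * n + n := by ring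
      rw [this, Finset.sum_range_add]
      have h2 : ∑ t ∈ Finset.range n, f (c + ((q * n + t : ℕ) : ZMod n))
          = ∑ t ∈ Finset.range n, f (c + (t : ZMod n)) := by
        apply Finset.sum_congr rfl
        intro t _
        congr 1
        push_cast
        rw [ZMod.natCast_self]
        ring
      rw [h2, ih, period_sum]
      push_cast
      ring

/-- The averaging/cycle-covering argument: if `f : ℤ/nℤ → ℝ≥0` and every residue `i`
starts a block of some length `m' ∈ [1, m]` whose total `f`-weight is at most `α m'`,
then the total weight is at most `α n`. -/
theorem stmt13 (n : ℕ) [NeZero n] (f : ZMod n → ℝ) (hf : ∀ i, 0 ≤ f i)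
    (α : ℝ) (m : ℕ) (hm : 0 < m)
    (h : ∀ i : ZMod n, ∃ m' : ℕ, 1 ≤ m' ∧ m' ≤ m ∧
      ∑ t ∈ Finset.range m', f (i + (t : ZMod n)) ≤ α * m') :
    ∑ i : ZMod n, f i ≤ α * n := by
  classical
  choose g hg1 _ hgsum using h
  -- greedy partial sums
  obtain ⟨s, hs0, hssucc⟩ :
      ∃ s : ℕ → ℕ, s 0 = 0 ∧ ∀ k, s (k + 1) = s k + g ((s k : ℕ) : ZMod n) :=
    ⟨fun k => Nat.rec 0 (fun _ sk => sk + g ((sk : ℕ) : ZMod n)) k, rfl, fun _ => rfl⟩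
  have hsmono : StrictMono s := by
    apply strictMono_nat_of_lt_succ
    intro k
    rw [hssucc]
    exact Nat.lt_add_of_pos_right (hg1 _)
  -- block-sum bound between consecutive greedy cuts
  have hblock : ∀ j k : ℕ, j ≤ k →
      ∑ t ∈ Finset.Ico (s j) (s k), f ((t : ZMod n)) ≤ α * ((Nat.cast (s k) : ℝ) - (Nat.cast (s j) : ℝ)) := by
    intro j k hjk
    induction k with
    | zero =>
        have : j = 0 := Nat.le_zero.mp hjk
        subst this; simp
    | succ k ih =>
        rcases Nat.lt_or_ge j (k + 1) with hlt | hge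
        · have hjk' : j ≤ k := Nat.lt_succ_iff.mp hlt
          have hle : s j ≤ s k := hsmono.monotone hjk'
          have hle2 : s k ≤ s (k + 1) := hsmono.monotone (Nat.le_succ k)
          rw [← Finset.sum_Ico_consecutive _ hle hle2]
          have hb : ∑ t ∈ Finset.Ico (s k) (s (k + 1)), f ((t : ZMod n))
              ≤ α * (g ((Nat.cast (s k) : ZMod n)) : ℝ) := by
            rw [Finset.sum_Ico_eq_sum_range]
            have heq : ∀ t ∈ Finset.range (s (k+1) - s k),
                f (((s k + t : ℕ) : ZMod n)) = f (((s k) : ZMod n) + (t : ZMod n)) := by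
              intro t _; congr 1; push_cast; ring
            rw [Finset.sum_congr rfl heq]
            have : s (k + 1) - s k = g ((Nat.cast (s k) : ZMod n)) := by
              rw [hssucc]; omega
            rw [this]
            exact hgsum _
          have hcast : (Nat.cast (s (k+1)) : ℝ) - (Nat.cast (s j) : ℝ) = ((Nat.cast (s k) : ℝ) - (Nat.cast (s j) : ℝ)) + (g ((Nat.cast (s k) : ZMod n)) : ℝ) := by
            rw [hssucc]; push_cast; ring
          rw [hcast, mul_add]
          exact add_le_add (ih hjk') hb
        · have : j = k + 1 := le_antisymm hjk hge
          subst this; simp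
  -- pigeonhole: two cuts with the same residue
  have hpigeon : ∃ j k : ℕ, j < k ∧ k ≤ n ∧ ((Nat.cast (s j) : ZMod n)) = ((Nat.cast (s k) : ZMod n)) := by
    have hcard : (Finset.range (n + 1)).card > Fintype.card (ZMod n) := by
      simp [ZMod.card]
    obtain ⟨a, ha, b, hb, hab, heq⟩ :=
      Finset.exists_ne_map_eq_of_card_lt_of_maps_to hcard
        (fun k _ => Finset.mem_univ ((Nat.cast (s k) : ZMod n)))
    rcases lt_or_gt_of_ne hab with hlt | hlt
    · exact ⟨a, b, hlt, Nat.lt_succ_iff.mp (Finset.mem_range.mp hb), heq⟩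
    · exact ⟨b, a, hlt, Nat.lt_succ_iff.mp (Finset.mem_range.mp ha), heq.symm⟩
  obtain ⟨j, k, hjk, _, hres⟩ := hpigeon
  have hle : s j ≤ s k := hsmono.monotone hjk.le
  have hdvd : n ∣ s k - s j := by
    have := (ZMod.natCast_eq_natCast_iff _ _ _).mp hres
    exact (Nat.modEq_iff_dvd' hle).mp this
  obtain ⟨q, hq⟩ := hdvd
  have hqpos : 0 < q := by
    have : s j < s k := hsmono hjk
    rcases Nat.eq_zero_or_pos q with h0 | h0
    · rw [h0, Nat.mul_zero] at hq; omega
    · exact h0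
  -- compute the interval sum exactly
  have hsum : ∑ t ∈ Finset.Ico (s j) (s k), f ((t : ZMod n))
      = q * ∑ i : ZMod n, f i := by
    rw [Finset.sum_Ico_eq_sum_range]
    have heq : ∀ t ∈ Finset.range (s k - s j),
        f (((s j + t : ℕ) : ZMod n)) = f (((s j) : ZMod n) + (t : ZMod n)) := by
      intro t _; congr 1; push_cast; ring
    rw [Finset.sum_congr rfl heq, hq, Nat.mul_comm, multi_period_sum]
  have hbound := hblock j k hjk.le
  rw [hsum] at hbound
  have hcast : (Nat.cast (s k) : ℝ) - (Nat.cast (s j) : ℝ) = (q : ℝ) * n := by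
    have hsk : s k = s j + n * q := by omega
    rw [hsk]; push_cast; ring
  rw [hcast] at hbound
  have hq' : (0 : ℝ) < q := by exact_mod_cast hqpos
  nlinarith [hbound, hq']
end

section
/- Let a₁, …, aₙ be points in convex position in clockwise order and let 1 ≤ i < j < k ≤ n. If the interior angle ∠a_i a_j a_k ≥ π/2, then dist(a_i, a_m) > dist(a_i, a_j) for every m with j < m ≤ k. -/
/-!
Put the origin at `a_j` and let `u = a_i - a_j`, `w = a_k - a_j`, `v = a_m - a_j`. Convexity says
that `v` lies in the angular sector from `u` to `w`, and the obtuse angle says `⟪u, w⟫ ≤ 0`.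
Writing `[x, y]` for `cross2 x y`, the planar identity
`[u, w] ⟪u, v⟫ = [v, w] ‖u‖² + [u, v] ⟪u, w⟫` then gives `⟪u, v⟫ ≤ 0`, so
`‖u - v‖² = ‖u‖² - 2 ⟪u, v⟫ + ‖v‖² > ‖u‖²`.
-/

theorem InnerProductGeometry.inner_nonpos_of_pi_div_two_le_angle {V : Type*}
    [NormedAddCommGroup V] [InnerProductSpace ℝ V] {x y : V} (h : Real.pi / 2 ≤ angle x y) :
    inner ℝ x y ≤ 0 := by
  rw [← cos_angle_mul_norm_mul_norm]
  have hcos : Real.cos (angle x y) ≤ 0 :=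
    Real.cos_nonpos_of_pi_div_two_le_of_le h (by linarith [angle_le_pi x y, Real.pi_pos])
  exact mul_nonpos_of_nonpos_of_nonneg hcos (by positivity)

theorem norm_lt_norm_sub_of_inner_nonpos {V : Type*} [NormedAddCommGroup V]
    [InnerProductSpace ℝ V] {u v : V} (huv : inner ℝ u v ≤ 0) (hv : v ≠ 0) :
    ‖u‖ < ‖u - v‖ := by
  have hv' : 0 < ‖v‖ := norm_pos_iff.mpr hv
  refine lt_of_pow_lt_pow_left₀ 2 (norm_nonneg _) ?_
  rw [norm_sub_sq_real]
  nlinarith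

namespace Cross2

theorem self (u : EuclideanSpace ℝ (Fin 2)) : cross2 u u = 0 := by
  simp only [cross2]; ring

theorem zero_right (u : EuclideanSpace ℝ (Fin 2)) : cross2 u 0 = 0 := by
  simp [cross2]

theorem sub_sub_rotate (a b c : EuclideanSpace ℝ (Fin 2)) :
    cross2 (b - a) (c - a) = cross2 (c - b) (a - b) := by
  simp only [cross2, PiLp.sub_apply]; ring

theorem swap (u v : EuclideanSpace ℝ (Fin 2)) : cross2 v u = -cross2 u v := by
  simp only [cross2]; ring

theorem mul_inner_eq (u v w : EuclideanSpace ℝ (Fin 2)) :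
    cross2 u w * inner ℝ u v = cross2 v w * ‖u‖ ^ 2 + cross2 u v * inner ℝ u w := by
  simp only [cross2, ← real_inner_self_eq_norm_sq, PiLp.inner_apply, Fin.sum_univ_two,
    RCLike.inner_apply, conj_trivial]
  ring

theorem inner_nonpos_of_mem_sector {u v w : EuclideanSpace ℝ (Fin 2)} (huw : 0 < cross2 u w)
    (huv : 0 < cross2 u v) (hvw : cross2 v w ≤ 0) (h : inner ℝ u w ≤ 0) :
    inner ℝ u v ≤ 0 := by
  have key := mul_inner_eq u v w
  have : cross2 u w * inner ℝ u v ≤ 0 := by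
    rw [key]
    exact add_nonpos (mul_nonpos_of_nonpos_of_nonneg hvw (sq_nonneg _))
      (mul_nonpos_of_nonneg_of_nonpos huv.le h)
  exact nonpos_of_mul_nonpos_right this huw

end Cross2

namespace ClockwiseConvexPos

variable {n : ℕ} {P : Fin n → EuclideanSpace ℝ (Fin 2)}

theorem cross2_pos (hP : ClockwiseConvexPos P) {i j k : Fin n} (hij : i < j) (hjk : j < k) :
    0 < cross2 (P i - P j) (P k - P j) := by
  have h := hP i j k hij hjk
  rw [Cross2.sub_sub_rotate, Cross2.swap] at h
  linarith

theorem cross2_nonpos (hP : ClockwiseConvexPos P) {j m k : Fin n} (hjm : j < m) (hmk : m ≤ k) :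
    cross2 (P m - P j) (P k - P j) ≤ 0 := by
  rcases hmk.lt_or_eq with hmk | rfl
  · exact (hP j m k hjm hmk).le
  · exact (Cross2.self _).le

end ClockwiseConvexPos

/-- If the angle `∠ a_i a_j a_k` (at vertex `a_j`) of a convex polygon is at least `π/2`,
then `dist a_i a_m > dist a_i a_j` for every `m` with `j < m ≤ k`. -/
theorem stmt18 {n : ℕ} (P : Fin n → EuclideanSpace ℝ (Fin 2)) (hP : ClockwiseConvexPos P)
    (i j k : Fin n) (hij : i < j) (hjk : j < k)
    (hangle : Real.pi / 2 ≤ EuclideanGeometry.angle (P i) (P j) (P k)) :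
    ∀ m : Fin n, j < m → m ≤ k → dist (P i) (P j) < dist (P i) (P m) := by
  intro m hjm hmk
  have hinner : inner ℝ (P i - P j) (P m - P j) ≤ 0 :=
    Cross2.inner_nonpos_of_mem_sector (hP.cross2_pos hij hjk) (hP.cross2_pos hij hjm)
      (hP.cross2_nonpos hjm hmk)
      (InnerProductGeometry.inner_nonpos_of_pi_div_two_le_angle hangle)
  have hne : P m - P j ≠ 0 := fun h0 => by
    simpa [h0, Cross2.zero_right] using hP.cross2_pos hij hjm
  rw [dist_eq_norm, dist_eq_norm, ← sub_sub_sub_cancel_right (P i) (P m) (P j)]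
  exact norm_lt_norm_sub_of_inner_nonpos hinner hne
end
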